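/- arXiv:1502.07839 — 7 statements merged into one kernel-verified Lean document; each statement's English description precedes it below -/
import Mathlib

section
/- Suppose Wi-Fi is free (p(l,2) = 0) and the Wi-Fi rate dominates the cellular rate at location l, i.e., μ(l,1) ≤ μ(l,2). Then ψ_t(k,l,1) ≥ ψ_t(k,l,2) and ψ_t(k,l,0) ≥ ψ_t(k,l,2) for all k and t; hence Wi-Fi (action 2) is an optimal action at location l in every state and time slot. -/
/-- If Wi-Fi is free (`p 2 = 0`) and the Wi-Fi rate dominates the
cellular rate (`μ 1 ≤ μ 2`), then `ψ k 1 ≥ ψ k 2` and `ψ k 0 ≥ ψ k 2` for all `k`: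
Wi-Fi is an optimal action in every state. -/
theorem stmt_3
    {L : Type*} [Fintype L]
    (μ p : ℕ → ℝ) (P : L → ℝ)
    (hμ0 : μ 0 = 0) (hμ12 : μ 1 ≤ μ 2) (hμ1 : 0 ≤ μ 1)
    (hp0 : p 0 = 0) (hp1 : 0 ≤ p 1) (hp2 : p 2 = 0)
    (hP0 : ∀ l', 0 ≤ P l') (hP1 : ∑ l', P l' = 1)
    (w : ℝ → L → ℝ) (hw : ∀ l', Monotone (fun k => w k l'))
    (ψ : ℝ → ℕ → ℝ)
    (hψ : ∀ k a, ψ k a = min k (μ a) * p a + ∑ l', P l' * w (max 0 (k - μ a)) l')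
    : ∀ k, 0 ≤ k → (ψ k 1 ≥ ψ k 2 ∧ ψ k 0 ≥ ψ k 2) := by
  intro k hk
  have hsum : ∀ a b : ℕ, μ a ≤ μ b →
      ∑ l', P l' * w (max 0 (k - μ b)) l' ≤ ∑ l', P l' * w (max 0 (k - μ a)) l' := by
    intro a b hab
    apply Finset.sum_le_sum
    intro l' _
    exact mul_le_mul_of_nonneg_left
      (hw l' (max_le_max le_rfl (by linarith))) (hP0 l')
  constructor
  · rw [hψ k 1, hψ k 2, hp2, mul_zero, zero_add]
    have h1 : 0 ≤ min k (μ 1) * p 1 :=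
      mul_nonneg (le_min hk hμ1) hp1
    have := hsum 1 2 hμ12
    linarith
  · rw [hψ k 0, hψ k 2, hp0, hp2, mul_zero, mul_zero, zero_add, zero_add]
    exact hsum 0 2 (by linarith [hμ1, hμ12, hμ0])
end

section
/- Let h: ℝ → ℝ be convex and nondecreasing, let 0 ≤ μ_j ≤ μ_1 and σ > 0. Then for all k, h([k − μ_j]⁺) − h([k − μ_1]⁺) ≥ h([k − σ − μ_j]⁺) − h([k − σ − μ_1]⁺), where [x]⁺ = max{0,x}. -/
/-- Supermodularity of a convex function on ℝ: if `a ≤ b`, `a ≤ c`, `a + d = b + c`,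
then `f b + f c ≤ f a + f d`. -/
lemma convex_superadd (f : ℝ → ℝ) (hf : ConvexOn ℝ Set.univ f)
    (a b c d : ℝ) (hab : a ≤ b) (hac : a ≤ c) (hsum : a + d = b + c) :
    f b + f c ≤ f a + f d := by
  rcases eq_or_lt_of_le (show a ≤ d by linarith) with had | had
  · have hb : b = a := le_antisymm (by linarith) hab
    have hc : c = a := le_antisymm (by linarith) hac
    rw [hb, hc, ← had]
  · set t : ℝ := (d - b) / (d - a) with ht
    have hda : (0:ℝ) < d - a := by linarith
    have ht0 : 0 ≤ t := div_nonneg (by linarith) hda.le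
    have ht1 : t ≤ 1 := by
      rw [div_le_one hda]; linarith
    have htd : t * (d - a) = d - b := by
      rw [ht]; field_simp
    have hbt : b = t * a + (1 - t) * d := by linear_combination htd
    have hct : c = (1 - t) * a + t * d := by
      have : c = a + d - b := by linarith
      rw [this, hbt]; ring
    have h1 := hf.2 (Set.mem_univ a) (Set.mem_univ d) ht0
      (show (0:ℝ) ≤ 1 - t by linarith) (show t + (1 - t) = 1 by ring)
    have h2 := hf.2 (Set.mem_univ a) (Set.mem_univ d) (by linarith : (0:ℝ) ≤ 1 - t)
      ht0 (show (1 - t) + t = 1 by ring)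
    simp only [smul_eq_mul] at h1 h2
    rw [hbt, hct]
    nlinarith [h1, h2]

/-- For `h : ℝ → ℝ` convex and nondecreasing, `0 ≤ μⱼ ≤ μ₁`, `σ > 0`:
`h([k − μⱼ]⁺) − h([k − μ₁]⁺) ≥ h([k − σ − μⱼ]⁺) − h([k − σ − μ₁]⁺)` for all `k`. -/
theorem stmt_4
    (h : ℝ → ℝ) (hconv : ConvexOn ℝ Set.univ h) (hmono : Monotone h)
    (μj μ1 σ : ℝ) (hμj : 0 ≤ μj) (hμ : μj ≤ μ1) (hσ : 0 < σ)
    : ∀ k : ℝ,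
      h (max 0 (k - μj)) - h (max 0 (k - μ1)) ≥
        h (max 0 (k - σ - μj)) - h (max 0 (k - σ - μ1)) := by
  intro k
  -- f = h ∘ [·]⁺ is convex
  have hg : ConvexOn ℝ Set.univ (fun x : ℝ => max 0 x) :=
    (convexOn_const 0 convex_univ).sup (convexOn_id convex_univ)
  have hf : ConvexOn ℝ Set.univ (fun x : ℝ => h (max 0 x)) := by
    refine ⟨convex_univ, fun x _ y _ s t hs htt hst => ?_⟩
    have step1 : max 0 (s • x + t • y) ≤ s • max 0 x + t • max 0 y :=
      hg.2 (Set.mem_univ x) (Set.mem_univ y) hs htt hst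
    calc h (max 0 (s • x + t • y)) ≤ h (s • max 0 x + t • max 0 y) := hmono step1
      _ ≤ s • h (max 0 x) + t • h (max 0 y) :=
        hconv.2 (Set.mem_univ _) (Set.mem_univ _) hs htt hst
  have key := convex_superadd (fun x : ℝ => h (max 0 x)) hf
    (k - σ - μ1) (k - μ1) (k - σ - μj) (k - μj)
    (by linarith) (by linarith) (by ring)
  linarith
end

section
/- Consider the simplified DP where the per-slot cost of the cellular action is a constant q ≥ 0 and all other actions are free: ψ_t(k,l,a) = 1{a=1}·q + Σ_{l'} P(l'|l)·v_{t+1}([k − μ_a]⁺, l'), with location-independent rates μ_0 = 0 ≤ μ_j ≤ μ_1, v_t(k,l) = min_{a ∈ {j,1}} ψ_t(k,l,a), and v_{T+1}(k,l) = h(k) with h convex and nondecreasing, h(0) = 0. Then for every t ∈ {1,…,T+1}, every l, and every k: v_t([k − μ_j]⁺, l) − v_t([k − μ_1]⁺, l) ≥ v_t([k − σ − μ_j]⁺, l) − v_t([k − σ − μ_1]⁺, l), for any fixed step σ > 0. That is, the value-difference between the slow and fast action is nondecreasing in the remaining file size. -/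
/-- Four-point inequality for convex functions: the `σ`-increment is monotone. -/
lemma four_pt (φ : ℝ → ℝ) (hφ : ConvexOn ℝ Set.univ φ) {a b σ : ℝ}
    (hab : b ≤ a) (hσ : 0 ≤ σ) : φ (a - σ) + φ b ≤ φ a + φ (b - σ) := by
  by_cases hpq : b - σ = a
  · have hσ0 : σ = 0 := by linarith
    subst hσ0
    simp
  · have hlt : b - σ < a := lt_of_le_of_ne (by linarith) hpq
    have hden : a - (b - σ) > 0 := by linarith
    set t : ℝ := σ / (a - (b - σ)) with ht
    have ht0 : 0 ≤ t := div_nonneg hσ (le_of_lt hden)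
    have htσ : t * (a - (b - σ)) = σ := div_mul_cancel₀ _ (ne_of_gt hden)
    have ht1 : t ≤ 1 := by
      rw [div_le_one hden]; linarith
    have h1t0 : 0 ≤ 1 - t := by linarith
    have hsum1 : t + (1 - t) = 1 := by ring
    have hsum2 : (1 - t) + t = 1 := by ring
    have c1 := hφ.2 (Set.mem_univ (b - σ)) (Set.mem_univ a) ht0 h1t0 hsum1
    have c2 := hφ.2 (Set.mem_univ (b - σ)) (Set.mem_univ a) h1t0 ht0 hsum2
    simp only [smul_eq_mul] at c1 c2
    have e1 : t * (b - σ) + (1 - t) * a = a - σ := by linear_combination -htσ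
    have e2 : (1 - t) * (b - σ) + t * a = b := by linear_combination htσ
    rw [e1] at c1
    rw [e2] at c2
    linarith

/-- Pure real exchange lemma over the four `min`s. -/
lemma min_exchange (a b c a' b' c' q : ℝ) (h1 : a' - b' ≤ a - b) (h2 : b' - c' ≤ b - c) :
    min a' (q + b') + min b (q + c) ≤ min a (q + b) + min b' (q + c') := by
  have hA1 : min a' (q + b') ≤ a' := min_le_left _ _
  have hA2 : min a' (q + b') ≤ q + b' := min_le_right _ _
  have hB1 : min b (q + c) ≤ b := min_le_left _ _
  have hB2 : min b (q + c) ≤ q + c := min_le_right _ _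
  rcases le_total a (q + b) with hc1 | hc1 <;> rcases le_total b' (q + c') with hc2 | hc2
  · rw [min_eq_left hc1, min_eq_left hc2]; linarith
  · rw [min_eq_left hc1, min_eq_right hc2]; linarith
  · rw [min_eq_right hc1, min_eq_left hc2]; linarith
  · rw [min_eq_right hc1, min_eq_right hc2]; linarith

/-- In the simplified DP with two actions `{j,1}` at every location,
location-independent rates `0 ≤ μⱼ ≤ μ₁`, constant cellular cost `q ≥ 0` incurred only
by action 1, recursion
`v t k l = min (Σ_{l'} P(l'|l)·v (t+1) ([k−μⱼ]⁺) l') (q + Σ_{l'} P(l'|l)·v (t+1) ([k−μ₁]⁺) l')`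
and boundary `v (T+1) k l = h k` with `h` convex, nondecreasing, `h 0 = 0`, the
value difference between the slow and fast action is nondecreasing in the remaining
file size: for all `t ∈ {1,…,T+1}`, `l`, `k`, and step `σ > 0`,
`v t ([k−μⱼ]⁺) l − v t ([k−μ₁]⁺) l ≥ v t ([k−σ−μⱼ]⁺) l − v t ([k−σ−μ₁]⁺) l`. -/
theorem stmt_5
    {L : Type*} [Fintype L]
    (T : ℕ) (μj μ1 q σ : ℝ)
    (hμj : 0 ≤ μj) (hμ : μj ≤ μ1) (hq : 0 ≤ q) (hσ : 0 < σ)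
    (P : L → L → ℝ) (hP0 : ∀ l l', 0 ≤ P l l') (hP1 : ∀ l, ∑ l', P l l' = 1)
    (h : ℝ → ℝ) (hconv : ConvexOn ℝ Set.univ h) (hmono : Monotone h) (hh0 : h 0 = 0)
    (v : ℕ → ℝ → L → ℝ)
    (hbd : ∀ k l, v (T + 1) k l = h k)
    (hrec : ∀ t, 1 ≤ t → t ≤ T → ∀ k l,
      v t k l = min (∑ l', P l l' * v (t + 1) (max 0 (k - μj)) l')
                    (q + ∑ l', P l l' * v (t + 1) (max 0 (k - μ1)) l'))
    : ∀ t, 1 ≤ t → t ≤ T + 1 → ∀ l k,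
        v t (max 0 (k - μj)) l - v t (max 0 (k - μ1)) l ≥
          v t (max 0 (k - σ - μj)) l - v t (max 0 (k - σ - μ1)) l := by
  have hμ1 : 0 ≤ μ1 := le_trans hμj hμ
  -- collapse of iterated positive part
  have hmax : ∀ (x μ : ℝ), 0 ≤ μ → max 0 (max 0 x - μ) = max 0 (x - μ) := by
    intro x μ hμ'
    rcases le_total x 0 with hx | hx
    · rw [max_eq_left hx, max_eq_left (by linarith : (0:ℝ) - μ ≤ 0),
        max_eq_left (by linarith : x - μ ≤ 0)]
    · rw [max_eq_right hx]
  -- convexity of h ∘ max 0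
  have hφ : ConvexOn ℝ Set.univ (fun x => h (max 0 x)) := by
    refine ⟨convex_univ, ?_⟩
    intro x _ y _ a b ha hb hab
    simp only [smul_eq_mul]
    have m : max 0 (a * x + b * y) ≤ a * max 0 x + b * max 0 y := by
      apply max_le
      · exact add_nonneg (mul_nonneg ha (le_max_left _ _)) (mul_nonneg hb (le_max_left _ _))
      · exact add_le_add (mul_le_mul_of_nonneg_left (le_max_right 0 x) ha)
          (mul_le_mul_of_nonneg_left (le_max_right 0 y) hb)
    calc h (max 0 (a * x + b * y)) ≤ h (a * max 0 x + b * max 0 y) := hmono m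
      _ ≤ a * h (max 0 x) + b * h (max 0 y) := by
          have := hconv.2 (Set.mem_univ (max 0 x)) (Set.mem_univ (max 0 y)) ha hb hab
          simpa using this
  suffices H : ∀ n t, t + n = T + 1 → 1 ≤ t → ∀ l k,
      v t (max 0 (k - μj)) l - v t (max 0 (k - μ1)) l ≥
        v t (max 0 (k - σ - μj)) l - v t (max 0 (k - σ - μ1)) l by
    intro t h1 h2 l k
    exact H (T + 1 - t) t (by omega) h1 l k
  intro n
  induction n with
  | zero =>
    intro t ht h1 l k
    have hT : t = T + 1 := by omega
    subst hT
    rw [hbd, hbd, hbd, hbd]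
    have key := four_pt _ hφ (show k - μ1 ≤ k - μj by linarith) (le_of_lt hσ)
    have e1 : k - μj - σ = k - σ - μj := by ring
    have e2 : k - μ1 - σ = k - σ - μ1 := by ring
    rw [e1, e2] at key
    linarith
  | succ n ih =>
    intro t ht h1 l k
    have h2 : t ≤ T := by omega
    have IH := ih (t + 1) (by omega) (by omega)
    set G : ℝ → ℝ := fun x => ∑ l', P l l' * v (t + 1) (max 0 x) l' with hG
    have Gstep : ∀ x, G (x - σ - μj) - G (x - σ - μ1) ≤ G (x - μj) - G (x - μ1) := by
      intro x
      have hterm : ∀ l' ∈ Finset.univ,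
          P l l' * v (t + 1) (max 0 (x - σ - μj)) l' -
            P l l' * v (t + 1) (max 0 (x - σ - μ1)) l' ≤
          P l l' * v (t + 1) (max 0 (x - μj)) l' -
            P l l' * v (t + 1) (max 0 (x - μ1)) l' := by
        intro l' _
        have := IH l' x
        nlinarith [hP0 l l', mul_le_mul_of_nonneg_left
          (sub_le_sub_iff.mpr (by linarith : v (t+1) (max 0 (x - σ - μj)) l' +
            v (t+1) (max 0 (x - μ1)) l' ≤ v (t+1) (max 0 (x - μj)) l' +
            v (t+1) (max 0 (x - σ - μ1)) l')) (hP0 l l')]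
      have hs := Finset.sum_le_sum hterm
      rw [Finset.sum_sub_distrib, Finset.sum_sub_distrib] at hs
      exact hs
    have vfour : ∀ x : ℝ, v t (max 0 x) l =
        min (G (x - μj)) (q + G (x - μ1)) := by
      intro x
      rw [hrec t h1 h2 (max 0 x) l, hmax x μj hμj, hmax x μ1 hμ1]
    rw [vfour (k - μj), vfour (k - μ1), vfour (k - σ - μj), vfour (k - σ - μ1)]
    have eA : k - μ1 - μj = k - μj - μ1 := by ring
    have eB : k - σ - μ1 - μj = k - σ - μj - μ1 := by ring
    rw [eA, eB]
    have g1 := Gstep (k - μj)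
    have g2 := Gstep (k - μ1)
    have e1 : k - μj - σ - μj = k - σ - μj - μj := by ring
    have e2 : k - μj - σ - μ1 = k - σ - μj - μ1 := by ring
    have e3 : k - μ1 - σ - μj = k - σ - μj - μ1 := by ring
    have e4 : k - μ1 - σ - μ1 = k - σ - μ1 - μ1 := by ring
    have e5 : k - μ1 - μj = k - μj - μ1 := by ring
    rw [e1, e2] at g1
    rw [e3, e4, e5] at g2
    have key := min_exchange (G (k - μj - μj)) (G (k - μj - μ1)) (G (k - μ1 - μ1))
      (G (k - σ - μj - μj)) (G (k - σ - μj - μ1)) (G (k - σ - μ1 - μ1)) q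
      (by linarith) (by linarith)
    linarith
end

section
/- In the simplified two-action DP (actions {0,1} at a non-Wi-Fi location l, with μ_0 = 0 < μ_1, constant cellular cost q, and value functions satisfying the value-difference monotonicity v_{t+1}([k̂ − μ_0]⁺,l') − v_{t+1}([k̂ − μ_1]⁺,l') ≥ v_{t+1}([ǩ − μ_0]⁺,l') − v_{t+1}([ǩ − μ_1]⁺,l') whenever k̂ ≥ ǩ), the function ψ_t(k,l,a) = 1{a=1}·q + Σ_{l'} P(l'|l)·v_{t+1}([k − μ_a]⁺, l') is subadditive on K × {0,1}: for k̂ ≥ ǩ and â ≥ ǎ, ψ_t(k̂,l,â) + ψ_t(ǩ,l,ǎ) ≤ ψ_t(k̂,l,ǎ) + ψ_t(ǩ,l,â). -/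
/-- At a non-Wi-Fi location with actions `{0,1}`, rates `μ₀ = 0 < μ₁`,
constant cellular cost `q`, and value functions `w = v_{t+1}` satisfying the
value-difference monotonicity in `k`, the state-action cost
`ψ k a = 1{a=1}·q + Σ_{l'} P(l'|l)·w([k − μ_a]⁺) l'` is subadditive (submodular) on
`K × {0,1}`: for `k̂ ≥ ǩ` and `â ≥ ǎ` in `{0,1}`,
`ψ k̂ â + ψ ǩ ǎ ≤ ψ k̂ ǎ + ψ ǩ â`. -/
theorem stmt_6
    {L : Type*} [Fintype L]
    (μ0 μ1 q : ℝ) (hμ0 : μ0 = 0) (hμ1 : 0 < μ1) (hq : 0 ≤ q)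
    (P : L → ℝ) (hP0 : ∀ l', 0 ≤ P l') (hP1 : ∑ l', P l' = 1)
    (w : ℝ → L → ℝ)
    (hdiff : ∀ l' (khat kchk : ℝ), kchk ≤ khat →
      w (max 0 (khat - μ0)) l' - w (max 0 (khat - μ1)) l' ≥
        w (max 0 (kchk - μ0)) l' - w (max 0 (kchk - μ1)) l')
    (ψ : ℝ → ℕ → ℝ)
    (hψ : ∀ k a, ψ k a = (if a = 1 then q else 0) +
      ∑ l', P l' * w (max 0 (k - (if a = 1 then μ1 else μ0))) l')
    : ∀ (khat kchk : ℝ) (ahat achk : ℕ), kchk ≤ khat →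
        ahat ∈ ({0, 1} : Set ℕ) → achk ∈ ({0, 1} : Set ℕ) → achk ≤ ahat →
        ψ khat ahat + ψ kchk achk ≤ ψ khat achk + ψ kchk ahat := by
  intro khat kchk ahat achk hk ha hc hle
  rcases ha with ha | ha <;> rcases hc with hc | hc <;> subst ha <;> subst hc
  · exact le_refl _
  · omega
  · -- ahat = 1, achk = 0
    rw [hψ, hψ, hψ, hψ]
    norm_num
    have key : ∑ l', P l' * w (max 0 (khat - μ1)) l' +
        ∑ l', P l' * w (max 0 (kchk - μ0)) l' ≤
        ∑ l', P l' * w (max 0 (khat - μ0)) l' +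
        ∑ l', P l' * w (max 0 (kchk - μ1)) l' := by
      rw [← Finset.sum_add_distrib, ← Finset.sum_add_distrib]
      apply Finset.sum_le_sum
      intro l' _
      have h := hdiff l' khat kchk hk
      nlinarith [hP0 l']
    linarith
  · exact le_refl _
end

section
/- In the simplified DP with boundary v_{T+1}(k,l) = h(k), h convex and nondecreasing with h(0)=0, rates μ_j ≤ μ_1, and cellular cost q ≥ 0, the last-stage value differences satisfy: for all k and l, v_{T+1}([k−μ_j]⁺, l) − v_{T+1}([k−μ_1]⁺, l) ≥ v_T([k−μ_j]⁺, l) − v_T([k−μ_1]⁺, l), where v_T(k,l) = min{ Σ_{l'} P(l'|l)·h([k−μ_j]⁺), q + Σ_{l'} P(l'|l)·h([k−μ_1]⁺) } = min{ h([k−μ_j]⁺), q + h([k−μ_1]⁺) }. -/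
/-!
With `g x = h [x]⁺`, which is convex because `h` is convex and nondecreasing, every quantity
in the claim is a value of `g`, and `h` agrees with `g` on `[0, ∞)`. Convexity of `g` means its
increments over an interval of fixed length grow as the interval moves right, so shifting left
by `μ ≥ 0` can only shrink an increment. The increment of a minimum of two shifted copies of
`g` is bounded by the increment of whichever branch attains the minimum at the smaller point.
-/

open Set

section

variable {𝕜 : Type*} [Field 𝕜] [LinearOrder 𝕜] [IsStrictOrderedRing 𝕜] {s : Set 𝕜} {f : 𝕜 → 𝕜}

theorem ConvexOn.map_add_map_le_of_add_eq (hf : ConvexOn 𝕜 s f) {a b c d : 𝕜} (ha : a ∈ s)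
    (hd : d ∈ s) (hab : a ≤ b) (hac : a ≤ c) (hsum : b + c = a + d) :
    f b + f c ≤ f a + f d := by
  rcases hab.eq_or_lt with rfl | hab
  · obtain rfl : c = d := by linarith
    exact le_rfl
  have had : 0 < d - a := by linarith
  -- `b` and `c` are the two mirror-image convex combinations of `a` and `d`
  set θ := (d - b) / (d - a)
  have hθ : θ ≤ 1 := (div_le_one had).2 (by linarith)
  have hb : θ • a + (1 - θ) • d = b := by
    simp only [θ, smul_eq_mul]; field_simp; ring
  have hc : (1 - θ) • a + θ • d = c := by
    simp only [smul_eq_mul] at hb ⊢; linear_combination -hsum - hb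
  have h₁ := hf.2 ha hd (div_nonneg (by linarith) had.le) (sub_nonneg.2 hθ) (add_sub_cancel θ 1)
  have h₂ := hf.2 ha hd (sub_nonneg.2 hθ) (div_nonneg (by linarith) had.le) (sub_add_cancel 1 θ)
  rw [hb] at h₁
  rw [hc] at h₂
  simp only [smul_eq_mul] at h₁ h₂
  linarith

theorem ConvexOn.map_sub_sub_map_sub_le (hf : ConvexOn 𝕜 s f) {x y μ : 𝕜} (hyμ : y - μ ∈ s)
    (hx : x ∈ s) (hμ : 0 ≤ μ) (hyx : y ≤ x) :
    f (x - μ) - f (y - μ) ≤ f x - f y := by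
  have := hf.map_add_map_le_of_add_eq hyμ hx (b := x - μ) (c := y) (by linarith) (by linarith)
    (by ring)
  linarith

theorem ConvexOn.min_shift_sub_min_shift_le (hf : ConvexOn 𝕜 univ f) {a b c x y : 𝕜}
    (ha : 0 ≤ a) (hb : 0 ≤ b) (hyx : y ≤ x) :
    min (f (x - a)) (c + f (x - b)) - min (f (y - a)) (c + f (y - b)) ≤ f x - f y := by
  rcases le_total (f (y - a)) (c + f (y - b)) with hy | hy
  · have := hf.map_sub_sub_map_sub_le (mem_univ _) (mem_univ _) ha hyx
    rw [min_eq_left hy]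
    linarith [min_le_left (f (x - a)) (c + f (x - b))]
  · have := hf.map_sub_sub_map_sub_le (mem_univ _) (mem_univ _) hb hyx
    rw [min_eq_right hy]
    linarith [min_le_right (f (x - a)) (c + f (x - b))]

theorem ConvexOn.comp_max_zero (hf : ConvexOn 𝕜 univ f) (hmono : Monotone f) :
    ConvexOn 𝕜 univ fun x => f (max 0 x) := by
  have hmax : ConvexOn 𝕜 univ fun x : 𝕜 => max 0 x :=
    (convexOn_const 0 convex_univ).sup (convexOn_id convex_univ)
  have himage : (fun x : 𝕜 => max 0 x) '' univ = Ici 0 := by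
    ext y
    simp only [image_univ, mem_range, mem_Ici]
    exact ⟨fun ⟨x, hx⟩ => hx ▸ le_max_left 0 x, fun hy => ⟨y, max_eq_right hy⟩⟩
  exact (hf.subset (subset_univ _) (himage ▸ convex_Ici 0)).comp hmax (hmono.monotoneOn _)

end

theorem stmt_10_general
    (μj μ1 q : ℝ) (hμj : 0 ≤ μj) (hμ : μj ≤ μ1)
    (h : ℝ → ℝ) (hconv : ConvexOn ℝ Set.univ h) (hmono : Monotone h)
    (vT : ℝ → ℝ)
    (hvT : ∀ k, vT k = min (h (max 0 (k - μj))) (q + h (max 0 (k - μ1))))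
    : ∀ k : ℝ,
        h (max 0 (k - μj)) - h (max 0 (k - μ1)) ≥
          vT (max 0 (k - μj)) - vT (max 0 (k - μ1)) := by
  intro k
  have key := (hconv.comp_max_zero hmono).min_shift_sub_min_shift_le (c := q) hμj
    (hμj.trans hμ) (max_le_max_left 0 (by linarith : k - μ1 ≤ k - μj))
  simp only [sup_left_idem] at key
  rw [hvT, hvT]
  exact key

/-- Last-stage value-difference inequality. With boundary
`v_{T+1}(k) = h k` (`h` convex, nondecreasing, `h 0 = 0`), rates `0 ≤ μⱼ ≤ μ₁`,
cost `q ≥ 0`, and `v_T k = min (h [k−μⱼ]⁺) (q + h [k−μ₁]⁺)` (the transition sums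
collapse since `Σ_{l'} P(l'|l) = 1`), we have for all `k`:
`h([k−μⱼ]⁺) − h([k−μ₁]⁺) ≥ v_T([k−μⱼ]⁺) − v_T([k−μ₁]⁺)`. -/
theorem stmt_10
    (μj μ1 q : ℝ) (hμj : 0 ≤ μj) (hμ : μj ≤ μ1) (hq : 0 ≤ q)
    (h : ℝ → ℝ) (hconv : ConvexOn ℝ Set.univ h) (hmono : Monotone h) (hh0 : h 0 = 0)
    (vT : ℝ → ℝ)
    (hvT : ∀ k, vT k = min (h (max 0 (k - μj))) (q + h (max 0 (k - μ1))))
    : ∀ k : ℝ,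
        h (max 0 (k - μj)) - h (max 0 (k - μ1)) ≥
          vT (max 0 (k - μj)) - vT (max 0 (k - μ1)) :=
  stmt_10_general μj μ1 q hμj hμ h hconv hmono vT hvT
end

section
/- In the simplified DP (two actions {j,1}, rates μ_j ≤ μ_1, cellular cost q, boundary h convex nondecreasing), the value difference between the slow and fast action is nondecreasing in time: for all k, l, and t ∈ {1,…,T}, v_{t+1}([k−μ_j]⁺, l) − v_{t+1}([k−μ_1]⁺, l) ≥ v_t([k−μ_j]⁺, l) − v_t([k−μ_1]⁺, l). -/
/-- Convex functions have nondecreasing increments: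
`h (x + d) + h y ≤ h x + h (y + d)` for `x ≤ y`, `0 ≤ d`. -/
private lemma convex_incr {h : ℝ → ℝ} (hconv : ConvexOn ℝ Set.univ h)
    {x y d : ℝ} (hxy : x ≤ y) (hd : 0 ≤ d) :
    h (x + d) + h y ≤ h x + h (y + d) := by
  rcases eq_or_lt_of_le hd with rfl | hd0
  · simp
  have hden : 0 < y + d - x := by linarith
  set s : ℝ := d / (y + d - x) with hs
  have hs0 : 0 ≤ s := div_nonneg hd hden.le
  have hs1 : s ≤ 1 := by rw [hs, div_le_one hden]; linarith
  have hmul : s * (y + d - x) = d := div_mul_cancel₀ d hden.ne'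
  have e1 : (1 - s) • x + s • (y + d) = x + d := by
    simp only [smul_eq_mul]; linear_combination hmul
  have e2 : s • x + (1 - s) • (y + d) = y := by
    simp only [smul_eq_mul]; linear_combination -hmul
  have c1 := hconv.2 (Set.mem_univ x) (Set.mem_univ (y + d)) (by linarith : (0:ℝ) ≤ 1 - s) hs0
    (by ring)
  have c2 := hconv.2 (Set.mem_univ x) (Set.mem_univ (y + d)) hs0 (by linarith : (0:ℝ) ≤ 1 - s)
    (by ring)
  rw [e1] at c1
  rw [e2] at c2
  simp only [smul_eq_mul] at c1 c2
  linarith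

/-- Key boundary lemma: for convex nondecreasing `h`, `0 ≤ b ≤ a`, `0 ≤ μ`,
`h [a−μ]⁺ − h [b−μ]⁺ ≤ h a − h b`. -/
private lemma keylem {h : ℝ → ℝ} (hconv : ConvexOn ℝ Set.univ h) (hmono : Monotone h)
    {a b μ : ℝ} (hb : 0 ≤ b) (hba : b ≤ a) (hμ : 0 ≤ μ) :
    h (max 0 (a - μ)) ≤ h (max 0 (b - μ)) + (h a - h b) := by
  have hb'0 : (0:ℝ) ≤ max 0 (b - μ) := le_max_left _ _
  have hb'2 : b - μ ≤ max 0 (b - μ) := le_max_right _ _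
  have hb'b : max 0 (b - μ) ≤ b := max_le hb (by linarith)
  have h1 : max 0 (a - μ) ≤ max 0 (b - μ) + (a - b) :=
    max_le (by linarith) (by linarith)
  have h2 := hmono h1
  have h3 := convex_incr hconv hb'b (by linarith : (0:ℝ) ≤ a - b)
  have e : b + (a - b) = a := by ring
  rw [e] at h3
  linarith

private lemma maxmax {μ : ℝ} (hμ : 0 ≤ μ) (s : ℝ) :
    max 0 (max 0 s - μ) = max 0 (s - μ) := by
  rcases le_total s 0 with hs | hs
  · rw [max_eq_left hs, zero_sub, max_eq_left (by linarith : -μ ≤ (0:ℝ)),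
      max_eq_left (by linarith : s - μ ≤ (0:ℝ))]
  · rw [max_eq_right hs]

/-- In the simplified DP (two actions `{j,1}`, rates `0 ≤ μⱼ ≤ μ₁`,
cellular cost `q ≥ 0`, boundary `h` convex nondecreasing with `h 0 = 0`), the value
difference between the slow and fast action is nondecreasing in time: for all
`k`, `l`, `t ∈ {1,…,T}`,
`v (t+1) ([k−μⱼ]⁺) l − v (t+1) ([k−μ₁]⁺) l ≥ v t ([k−μⱼ]⁺) l − v t ([k−μ₁]⁺) l`. -/
theorem stmt_11
    {L : Type*} [Fintype L]
    (T : ℕ) (μj μ1 q : ℝ)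
    (hμj : 0 ≤ μj) (hμ : μj ≤ μ1) (hq : 0 ≤ q)
    (P : L → L → ℝ) (hP0 : ∀ l l', 0 ≤ P l l') (hP1 : ∀ l, ∑ l', P l l' = 1)
    (h : ℝ → ℝ) (hconv : ConvexOn ℝ Set.univ h) (hmono : Monotone h) (hh0 : h 0 = 0)
    (v : ℕ → ℝ → L → ℝ)
    (hbd : ∀ k l, v (T + 1) k l = h k)
    (hrec : ∀ t, 1 ≤ t → t ≤ T → ∀ k l,
      v t k l = min (∑ l', P l l' * v (t + 1) (max 0 (k - μj)) l')
                    (q + ∑ l', P l l' * v (t + 1) (max 0 (k - μ1)) l'))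
    : ∀ t, 1 ≤ t → t ≤ T → ∀ k l,
        v (t + 1) (max 0 (k - μj)) l - v (t + 1) (max 0 (k - μ1)) l ≥
          v t (max 0 (k - μj)) l - v t (max 0 (k - μ1)) l := by
  have hμ1' : 0 ≤ μ1 := hμj.trans hμ
  suffices H : ∀ d t, 1 ≤ t → t + d = T → ∀ k l,
      v (t + 1) (max 0 (k - μj)) l - v (t + 1) (max 0 (k - μ1)) l ≥
        v t (max 0 (k - μj)) l - v t (max 0 (k - μ1)) l by
    intro t ht1 htT k l
    exact H (T - t) t ht1 (by omega) k l
  intro d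
  induction d with
  | zero =>
    intro t ht1 htT k l
    have hteq : t = T := by omega
    subst hteq
    have hab : max 0 (k - μ1) ≤ max 0 (k - μj) := max_le_max le_rfl (by linarith)
    have key1 : h (max 0 (k - μj - μj)) ≤
        h (max 0 (k - μj - μ1)) + (h (max 0 (k - μj)) - h (max 0 (k - μ1))) := by
      have hk := keylem hconv hmono (le_max_left 0 (k - μ1)) hab hμj
      rwa [maxmax hμj, maxmax hμj, show k - μ1 - μj = k - μj - μ1 by ring] at hk
    have key2 : h (max 0 (k - μj - μ1)) ≤
        h (max 0 (k - μ1 - μ1)) + (h (max 0 (k - μj)) - h (max 0 (k - μ1))) := by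
      have hk := keylem hconv hmono (le_max_left 0 (k - μ1)) hab hμ1'
      rwa [maxmax hμ1', maxmax hμ1'] at hk
    rw [hrec t ht1 le_rfl (max 0 (k - μj)) l, hrec t ht1 le_rfl (max 0 (k - μ1)) l]
    simp only [maxmax hμj, maxmax hμ1', hbd]
    rw [show k - μ1 - μj = k - μj - μ1 by ring]
    have sc : ∀ c : ℝ, (∑ l' : L, P l l' * c) = c := fun c => by
      rw [← Finset.sum_mul, hP1 l, one_mul]
    simp only [sc]
    rcases min_cases (h (max 0 (k - μj - μ1))) (q + h (max 0 (k - μ1 - μ1))) with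
      ⟨he, _⟩ | ⟨he, _⟩ <;>
      rw [he] <;>
      linarith [min_le_left (h (max 0 (k - μj - μj))) (q + h (max 0 (k - μj - μ1))),
        min_le_right (h (max 0 (k - μj - μj))) (q + h (max 0 (k - μj - μ1)))]
  | succ d ih =>
    intro t ht1 htT k l
    have ht1T : t + 1 ≤ T := by omega
    have htT' : t ≤ T := by omega
    have J1 : (∑ l', P l l' * v (t + 1 + 1) (max 0 (k - μj - μ1)) l') +
              (∑ l', P l l' * v (t + 1) (max 0 (k - μj - μj)) l') ≤
              (∑ l', P l l' * v (t + 1 + 1) (max 0 (k - μj - μj)) l') +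
              (∑ l', P l l' * v (t + 1) (max 0 (k - μj - μ1)) l') := by
      rw [← Finset.sum_add_distrib, ← Finset.sum_add_distrib]
      refine Finset.sum_le_sum fun l' _ => ?_
      have hih := ih (t + 1) (by omega) (by omega) (k - μj) l'
      nlinarith [mul_nonneg (hP0 l l') (by linarith :
        (0:ℝ) ≤ (v (t + 1 + 1) (max 0 (k - μj - μj)) l' -
            v (t + 1 + 1) (max 0 (k - μj - μ1)) l') -
          (v (t + 1) (max 0 (k - μj - μj)) l' - v (t + 1) (max 0 (k - μj - μ1)) l'))]
    have J2 : (∑ l', P l l' * v (t + 1 + 1) (max 0 (k - μ1 - μ1)) l') +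
              (∑ l', P l l' * v (t + 1) (max 0 (k - μj - μ1)) l') ≤
              (∑ l', P l l' * v (t + 1 + 1) (max 0 (k - μj - μ1)) l') +
              (∑ l', P l l' * v (t + 1) (max 0 (k - μ1 - μ1)) l') := by
      rw [← Finset.sum_add_distrib, ← Finset.sum_add_distrib]
      refine Finset.sum_le_sum fun l' _ => ?_
      have hih := ih (t + 1) (by omega) (by omega) (k - μ1) l'
      rw [show k - μ1 - μj = k - μj - μ1 by ring] at hih
      nlinarith [mul_nonneg (hP0 l l') (by linarith :
        (0:ℝ) ≤ (v (t + 1 + 1) (max 0 (k - μj - μ1)) l' -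
            v (t + 1 + 1) (max 0 (k - μ1 - μ1)) l') -
          (v (t + 1) (max 0 (k - μj - μ1)) l' - v (t + 1) (max 0 (k - μ1 - μ1)) l'))]
    rw [hrec t ht1 htT' (max 0 (k - μj)) l, hrec t ht1 htT' (max 0 (k - μ1)) l,
      hrec (t + 1) (by omega) ht1T (max 0 (k - μj)) l,
      hrec (t + 1) (by omega) ht1T (max 0 (k - μ1)) l]
    simp only [maxmax hμj, maxmax hμ1']
    rw [show k - μ1 - μj = k - μj - μ1 by ring]
    rcases min_cases (∑ l', P l l' * v (t + 1 + 1) (max 0 (k - μj - μj)) l')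
        (q + ∑ l', P l l' * v (t + 1 + 1) (max 0 (k - μj - μ1)) l') with
      ⟨e1, _⟩ | ⟨e1, _⟩ <;>
    rcases min_cases (∑ l', P l l' * v (t + 1) (max 0 (k - μj - μ1)) l')
        (q + ∑ l', P l l' * v (t + 1) (max 0 (k - μ1 - μ1)) l') with
      ⟨e2, _⟩ | ⟨e2, _⟩ <;>
    rw [e1, e2] <;>
    linarith [min_le_left (∑ l', P l l' * v (t + 1) (max 0 (k - μj - μj)) l')
        (q + ∑ l', P l l' * v (t + 1) (max 0 (k - μj - μ1)) l'),
      min_le_right (∑ l', P l l' * v (t + 1) (max 0 (k - μj - μj)) l')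
        (q + ∑ l', P l l' * v (t + 1) (max 0 (k - μj - μ1)) l'),
      min_le_left (∑ l', P l l' * v (t + 1 + 1) (max 0 (k - μj - μ1)) l')
        (q + ∑ l', P l l' * v (t + 1 + 1) (max 0 (k - μ1 - μ1)) l'),
      min_le_right (∑ l', P l l' * v (t + 1 + 1) (max 0 (k - μj - μ1)) l')
        (q + ∑ l', P l l' * v (t + 1 + 1) (max 0 (k - μ1 - μ1)) l'), J1, J2]
end

section
/- In the simplified DP, suppose the time-monotonicity of value differences holds: v_{t+2}([k−μ_j]⁺,l') − v_{t+2}([k−μ_1]⁺,l') ≥ v_{t+1}([k−μ_j]⁺,l') − v_{t+1}([k−μ_1]⁺,l') for all k, l'. Then if the cellular action is strictly optimal at time t in state (k,l) — i.e., ψ_t(k,l,1) < ψ_t(k,l,j) — the cellular action is also strictly optimal at time t+1 in the same state: ψ_{t+1}(k,l,1) < ψ_{t+1}(k,l,j). Consequently the optimal policy has a threshold structure in time: there exists t*(k,l) such that the optimal action is 1 for all t ≥ t*(k,l) and j for t < t*(k,l). -/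
/-- If the time-monotonicity of value differences holds
(`v (t+2)` differences dominate `v (t+1)` differences for all `k, l'`), then strict
optimality of cellular propagates forward in time: `ψ t k l 1 < ψ t k l j` implies
`ψ (t+1) k l 1 < ψ (t+1) k l j`, where
`ψ t k l a = 1{a=1}·q + Σ_{l'} P(l'|l)·v (t+1) ([k−μ_a]⁺) l'`. Consequently the
optimal action has a threshold structure in time on `{1,…,T}`: there is `t*(k,l)`
with cellular strictly optimal exactly when `t ≥ t*(k,l)`. -/
theorem stmt_12
    {L : Type*} [Fintype L]
    (T : ℕ) (μj μ1 q : ℝ) (hμ : μj ≤ μ1) (hq : 0 ≤ q)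
    (P : L → L → ℝ) (hP0 : ∀ l l', 0 ≤ P l l') (hP1 : ∀ l, ∑ l', P l l' = 1)
    (v : ℕ → ℝ → L → ℝ)
    (hmono : ∀ t : ℕ, ∀ (k : ℝ) (l' : L),
      v (t + 2) (max 0 (k - μj)) l' - v (t + 2) (max 0 (k - μ1)) l' ≥
        v (t + 1) (max 0 (k - μj)) l' - v (t + 1) (max 0 (k - μ1)) l')
    (ψ : ℕ → ℝ → L → ℕ → ℝ)
    (hψ : ∀ t k l a, ψ t k l a = (if a = 1 then q else 0) +
      ∑ l', P l l' * v (t + 1) (max 0 (k - (if a = 1 then μ1 else μj))) l')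
    : (∀ (t : ℕ) (k : ℝ) (l : L) (j : ℕ), j ≠ 1 →
        ψ t k l 1 < ψ t k l j → ψ (t + 1) k l 1 < ψ (t + 1) k l j) ∧
      (∀ (k : ℝ) (l : L) (j : ℕ), j ≠ 1 → ∃ tstar : ℕ,
        ∀ t, 1 ≤ t → t ≤ T → (ψ t k l 1 < ψ t k l j ↔ tstar ≤ t)) := by
  classical
  have key : ∀ (t : ℕ) (k : ℝ) (l : L) (j : ℕ), j ≠ 1 →
      ψ t k l 1 < ψ t k l j → ψ (t + 1) k l 1 < ψ (t + 1) k l j := by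
    intro t k l j hj h
    rw [hψ, hψ] at h ⊢
    simp only [if_pos rfl, if_true, if_neg hj, zero_add] at h ⊢
    have hsum : ∑ l', P l l' *
        (v (t + 2) (max 0 (k - μj)) l' - v (t + 2) (max 0 (k - μ1)) l') ≥
        ∑ l', P l l' *
        (v (t + 1) (max 0 (k - μj)) l' - v (t + 1) (max 0 (k - μ1)) l') :=
      Finset.sum_le_sum fun l' _ =>
        mul_le_mul_of_nonneg_left (hmono t k l') (hP0 l l')
    simp only [mul_sub, Finset.sum_sub_distrib] at hsum
    have h2 : t + 1 + 1 = t + 2 := rfl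
    rw [h2]
    linarith
  refine ⟨key, ?_⟩
  intro k l j hj
  have mono : ∀ s t : ℕ, s ≤ t → ψ s k l 1 < ψ s k l j → ψ t k l 1 < ψ t k l j := by
    intro s t hst
    induction t, hst using Nat.le_induction with
    | base => exact id
    | succ n hn ih => exact fun h => key n k l j hj (ih h)
  by_cases hT : ∃ t, 1 ≤ t ∧ t ≤ T ∧ ψ t k l 1 < ψ t k l j
  · refine ⟨Nat.find hT, fun t h1 h2 => ⟨fun h => ?_, fun h => ?_⟩⟩
    · exact Nat.find_min' hT ⟨h1, h2, h⟩
    · obtain ⟨_, _, hQ⟩ := Nat.find_spec hT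
      exact mono _ t h hQ
  · refine ⟨T + 1, fun t h1 h2 => ⟨fun h => absurd ⟨t, h1, h2, h⟩ hT, fun h => ?_⟩⟩
    omega
end
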